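/- arXiv:2302.08439 — 3 statements merged into one kernel-verified Lean document; each statement's English description precedes it below -/
import Mathlib

section
/- Let ξ be a Student t random variable with 2 degrees of freedom. Then for any real numbers α and u, E|α + uξ| = √(α² + 2u²). -/
/-! With p(x) = (2 + x²)^{-3/2}, which is the t₂ density, the integrand (α + u x) p(x) has the
explicit primitive F(x) = (αx − 2u) / (2√(2 + x²)), tending to ∓α/2 at ∓∞. For u > 0 it changes
sign exactly at c = −α/u, so ∫ |(α + ux) p| = (F(−∞) − F(c)) + (F(∞) − F(c)) = −2F(c), and
F(c) = −√(α² + 2u²)/2. The case u < 0 reduces to this one through (α, u) ↦ (−α, −u), and u = 0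
to ∫ p = 1. -/

open MeasureTheory Real Filter Set Topology

section ImproperIntegrals

variable {g g' : ℝ → ℝ} {a l : ℝ}

private lemma hasDerivAt_neg_comp_neg (hderiv : ∀ x ∈ Iic a, HasDerivAt g (g' x) x) :
    ∀ x ∈ Ici (-a), HasDerivAt (fun x => -g (-x)) (g' (-x)) x := fun x hx => by
  simpa using ((hderiv (-x) (mem_Iic.mpr (neg_le.mp hx))).comp x (hasDerivAt_neg x)).fun_neg

theorem integrableOn_Iic_deriv_of_nonneg' (hderiv : ∀ x ∈ Iic a, HasDerivAt g (g' x) x)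
    (g'pos : ∀ x ∈ Iio a, 0 ≤ g' x) (hg : Tendsto g atBot (𝓝 l)) : IntegrableOn g' (Iic a) := by
  have hreflect : IntegrableOn (fun x => g' (-x)) (Ici (-a)) := by
    rw [integrableOn_Ici_iff_integrableOn_Ioi]
    exact integrableOn_Ioi_deriv_of_nonneg' (hasDerivAt_neg_comp_neg hderiv)
      (fun x hx => g'pos _ (mem_Iio.mpr (neg_lt.mp hx))) (hg.comp tendsto_neg_atTop_atBot).neg
  simpa using hreflect.comp_neg_Iic

theorem integral_Iic_of_hasDerivAt_of_nonneg' (hderiv : ∀ x ∈ Iic a, HasDerivAt g (g' x) x)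
    (g'pos : ∀ x ∈ Iio a, 0 ≤ g' x) (hg : Tendsto g atBot (𝓝 l)) :
    ∫ x in Iic a, g' x = g a - l := by
  have hreflect := integral_Ioi_of_hasDerivAt_of_nonneg' (hasDerivAt_neg_comp_neg hderiv)
      (fun x hx => g'pos _ (mem_Iio.mpr (neg_lt.mp hx))) (hg.comp tendsto_neg_atTop_atBot).neg
  rw [integral_comp_neg_Ioi, neg_neg] at hreflect
  rw [hreflect]
  ring

end ImproperIntegrals

section WholeLine

variable {f F : ℝ → ℝ} {a b : ℝ}

theorem integral_of_hasDerivAt_of_nonneg (hF : ∀ x, HasDerivAt F (f x) x) (hf : ∀ x, 0 ≤ f x)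
    (hbot : Tendsto F atBot (𝓝 a)) (htop : Tendsto F atTop (𝓝 b)) : ∫ x, f x = b - a := by
  rw [← intervalIntegral.integral_Iic_add_Ioi (b := 0)
      (integrableOn_Iic_deriv_of_nonneg' (fun x _ => hF x) (fun x _ => hf x) hbot)
      (integrableOn_Ioi_deriv_of_nonneg' (fun x _ => hF x) (fun x _ => hf x) htop),
    integral_Iic_of_hasDerivAt_of_nonneg' (fun x _ => hF x) (fun x _ => hf x) hbot,
    integral_Ioi_of_hasDerivAt_of_nonneg' (fun x _ => hF x) (fun x _ => hf x) htop]
  ring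

theorem integral_abs_of_hasDerivAt_of_sign_change {c : ℝ} (hF : ∀ x, HasDerivAt F (f x) x)
    (hneg : ∀ x ≤ c, f x ≤ 0) (hpos : ∀ x ≥ c, 0 ≤ f x)
    (hbot : Tendsto F atBot (𝓝 a)) (htop : Tendsto F atTop (𝓝 b)) :
    ∫ x, |f x| = a + b - 2 * F c := by
  have hIic : EqOn (fun x => |f x|) (fun x => -f x) (Iic c) :=
    fun x hx => abs_of_nonpos (hneg x hx)
  have hIoi : EqOn (fun x => |f x|) f (Ioi c) := fun x hx => abs_of_nonneg (hpos x hx.le)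
  have hF' : ∀ x ∈ Iic c, HasDerivAt (fun x => -F x) (-f x) x := fun x _ => (hF x).fun_neg
  have hnonneg' : ∀ x ∈ Iio c, 0 ≤ -f x := fun x hx => neg_nonneg.mpr (hneg x hx.le)
  have hnonneg : ∀ x ∈ Ioi c, 0 ≤ f x := fun x hx => hpos x hx.le
  rw [← intervalIntegral.integral_Iic_add_Ioi (b := c)
      ((integrableOn_Iic_deriv_of_nonneg' hF' hnonneg' hbot.neg).congr_fun hIic.symm
        measurableSet_Iic)
      ((integrableOn_Ioi_deriv_of_nonneg' (fun x _ => hF x) hnonneg htop).congr_fun hIoi.symm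
        measurableSet_Ioi),
    setIntegral_congr_fun measurableSet_Iic hIic, setIntegral_congr_fun measurableSet_Ioi hIoi,
    integral_Iic_of_hasDerivAt_of_nonneg' hF' hnonneg' hbot.neg,
    integral_Ioi_of_hasDerivAt_of_nonneg' (fun x _ => hF x) hnonneg htop]
  ring

end WholeLine

noncomputable def studentT2PDF (x : ℝ) : ℝ := ((2 + x ^ 2) * √(2 + x ^ 2))⁻¹

lemma rpow_neg_three_halves {s : ℝ} (hs : 0 ≤ s) : s ^ (-(3:ℝ) / 2) = (s * √s)⁻¹ := by
  rw [neg_div, rpow_neg hs, show (3:ℝ) / 2 = 1 + 1 / 2 by norm_num, rpow_add' hs (by norm_num),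
    rpow_one, sqrt_eq_rpow]

lemma studentT2PDF_eq (x : ℝ) :
    1 / (2 * √2) * (1 + x ^ 2 / 2) ^ (-(3:ℝ) / 2) = studentT2PDF x := by
  rw [show 1 + x ^ 2 / 2 = (2 + x ^ 2) / 2 by ring, rpow_neg_three_halves (by positivity),
    studentT2PDF, sqrt_div' _ zero_le_two]
  field_simp

lemma studentT2PDF_nonneg (x : ℝ) : 0 ≤ studentT2PDF x := by
  unfold studentT2PDF; positivity

noncomputable def affinePrimitive (α u x : ℝ) : ℝ := (α * x - 2 * u) / (2 * √(2 + x ^ 2))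

lemma hasDerivAt_affinePrimitive (α u x : ℝ) :
    HasDerivAt (affinePrimitive α u) ((α + u * x) * studentT2PDF x) x := by
  have hs : 0 < 2 + x ^ 2 := by positivity
  have hsqrt : HasDerivAt (fun x => √(2 + x ^ 2)) (2 * x / (2 * √(2 + x ^ 2))) x := by
    simpa using (((hasDerivAt_pow 2 x).const_add 2).sqrt hs.ne')
  refine (((hasDerivAt_id' x).const_mul α).sub_const (2 * u)).div (hsqrt.const_mul 2)
    (by positivity) |>.congr_deriv ?_
  unfold studentT2PDF
  field_simp
  rw [sq_sqrt hs.le]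
  ring

lemma tendsto_affinePrimitive_atTop (α u : ℝ) :
    Tendsto (affinePrimitive α u) atTop (𝓝 (α / 2)) := by
  have hcont : ContinuousAt (fun t : ℝ => (α - 2 * u * t) / (2 * √(1 + 2 * t ^ 2))) 0 := by
    fun_prop (disch := simp)
  have hlim : Tendsto (fun x : ℝ => (α - 2 * u * x⁻¹) / (2 * √(1 + 2 * x⁻¹ ^ 2))) atTop
      (𝓝 (α / 2)) := by
    simpa [Function.comp_def] using hcont.tendsto.comp tendsto_inv_atTop_zero
  refine hlim.congr' ?_
  filter_upwards [eventually_gt_atTop 0] with x hx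
  have hsqrt : √(2 + x ^ 2) = x * √(1 + 2 * x⁻¹ ^ 2) := by
    rw [show 2 + x ^ 2 = x ^ 2 * (1 + 2 * x⁻¹ ^ 2) by field_simp; ring, sqrt_mul (sq_nonneg x),
      sqrt_sq hx.le]
  rw [affinePrimitive, hsqrt]
  field_simp

lemma affinePrimitive_neg (α u x : ℝ) : affinePrimitive α u (-x) = -affinePrimitive α (-u) x := by
  simp only [affinePrimitive, neg_sq]
  ring

lemma tendsto_affinePrimitive_atBot (α u : ℝ) :
    Tendsto (affinePrimitive α u) atBot (𝓝 (-(α / 2))) := by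
  have := ((tendsto_affinePrimitive_atTop α (-u)).comp tendsto_neg_atBot_atTop).neg
  refine this.congr fun x => ?_
  simp [affinePrimitive_neg]

lemma affinePrimitive_neg_div {α u : ℝ} (hu : 0 < u) :
    affinePrimitive α u (-(α / u)) = -√(α ^ 2 + 2 * u ^ 2) / 2 := by
  have hroot : √(2 + (-(α / u)) ^ 2) = √(α ^ 2 + 2 * u ^ 2) / u := by
    rw [show 2 + (-(α / u)) ^ 2 = (α ^ 2 + 2 * u ^ 2) / u ^ 2 by field_simp; ring,
      sqrt_div' _ (sq_nonneg u), sqrt_sq hu.le]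
  rw [affinePrimitive, hroot]
  field_simp
  rw [sq_sqrt (by positivity)]
  ring

lemma integral_abs_affine_mul_studentT2PDF_of_pos (α : ℝ) {u : ℝ} (hu : 0 < u) :
    ∫ x, |α + u * x| * studentT2PDF x = √(α ^ 2 + 2 * u ^ 2) := by
  have hfactor : ∀ x, α + u * x = u * (x - -(α / u)) := fun x => by field_simp; ring
  have habs : ∀ x, |α + u * x| * studentT2PDF x = |(α + u * x) * studentT2PDF x| := fun x => by
    rw [abs_mul, abs_of_nonneg (studentT2PDF_nonneg x)]
  simp_rw [habs]
  rw [integral_abs_of_hasDerivAt_of_sign_change (hasDerivAt_affinePrimitive α u)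
    (fun x hx => ?_) (fun x hx => ?_) (tendsto_affinePrimitive_atBot α u)
    (tendsto_affinePrimitive_atTop α u), affinePrimitive_neg_div hu]
  · ring
  · rw [hfactor]
    exact mul_nonpos_of_nonpos_of_nonneg (mul_nonpos_of_nonneg_of_nonpos hu.le (sub_nonpos.2 hx))
      (studentT2PDF_nonneg x)
  · rw [hfactor]
    exact mul_nonneg (mul_nonneg hu.le (sub_nonneg.2 hx)) (studentT2PDF_nonneg x)

lemma integral_studentT2PDF : ∫ x, studentT2PDF x = 1 := by
  rw [integral_of_hasDerivAt_of_nonneg (fun x => by simpa using hasDerivAt_affinePrimitive 1 0 x)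
    studentT2PDF_nonneg (tendsto_affinePrimitive_atBot 1 0) (tendsto_affinePrimitive_atTop 1 0)]
  ring

/-- For ξ a Student t random variable with 2 degrees of freedom (density
1/(2√2)·(1 + x²/2)^{−3/2}), for any reals α, u: E|α + uξ| = √(α² + 2u²). -/
theorem stmt_1 (α u : ℝ) :
    ∫ x : ℝ, |α + u * x| * (1 / (2 * Real.sqrt 2) * (1 + x ^ 2 / 2) ^ (-(3:ℝ) / 2)) =
    Real.sqrt (α ^ 2 + 2 * u ^ 2) := by
  simp_rw [studentT2PDF_eq]
  rcases lt_trichotomy u 0 with hu | rfl | hu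
  · have hflip : ∀ x, |α + u * x| = |-α + -u * x| := fun x => by
      rw [← abs_neg, neg_add, neg_mul]
    simp_rw [hflip]
    rw [integral_abs_affine_mul_studentT2PDF_of_pos (-α) (neg_pos.mpr hu), neg_sq, neg_sq]
  · simp [integral_const_mul, integral_studentT2PDF, sqrt_sq_eq_abs]
  · exact integral_abs_affine_mul_studentT2PDF_of_pos α hu
end

section
/- For every real x and b > 0, exp(−b|x|) = ∫₀^∞ (1/√(πω)) · exp(b²x²/(−4ω)) · e^{−ω} dω, i.e., the Laplace kernel is a scale mixture of Gaussians with standard exponential mixing distribution. -/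
open MeasureTheory Real Set

/-!
Substituting `ω = t ^ 2` and completing the square, `t ^ 2 + c ^ 2 / t ^ 2 = (t - c / t) ^ 2 + 2 c`
with `c = b |x| / 2`, reduces the claim to `∫₀^∞ exp (-(t - c / t) ^ 2) dt = √π / 2`. This is the
Cauchy–Schlömilch transformation: `u = t - c / t` maps `(0, ∞)` onto `ℝ` with `du = (1 + c / t²) dt`,
while `t ↦ c / t` shows that the parts of `∫ (1 + c / t²) exp (-u²) dt` with the weights `1` and
`c / t²` are equal, so each is half of the Gaussian integral.
-/

section CauchySchlomilch

variable {E : Type*} [NormedAddCommGroup E] [NormedSpace ℝ E] {c : ℝ}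

lemma hasDerivAt_sub_div (c : ℝ) {t : ℝ} (ht : t ≠ 0) :
    HasDerivAt (fun t : ℝ => t - c / t) (1 + c / t ^ 2) t := by
  have := (hasDerivAt_id' t).fun_sub ((hasDerivAt_inv ht).const_mul c)
  rw [show 1 + c / t ^ 2 = 1 - c * -(t ^ 2)⁻¹ by ring]
  simpa only [div_eq_mul_inv] using this

lemma strictMonoOn_sub_div (hc : 0 ≤ c) : StrictMonoOn (fun t : ℝ => t - c / t) (Ioi 0) :=
  fun a ha b _ hab => by
    have := div_le_div_of_nonneg_left hc ha hab.le
    dsimp only; linarith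

lemma image_sub_div_Ioi (hc : 0 < c) : (fun t : ℝ => t - c / t) '' Ioi 0 = univ := by
  refine eq_univ_of_forall fun u => ?_
  -- the positive root of `t ^ 2 - u t - c`
  set s := √(u ^ 2 + 4 * c)
  have hs : s ^ 2 = u ^ 2 + 4 * c := sq_sqrt (by positivity)
  have hus : 0 < u + s := by
    have : |u| < s := by
      rw [← sqrt_sq_eq_abs]; exact sqrt_lt_sqrt (sq_nonneg u) (by linarith)
    linarith [neg_abs_le u]
  refine ⟨(u + s) / 2, mem_Ioi.2 (by positivity), ?_⟩
  field_simp
  nlinarith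

lemma integral_Ioi_one_add_div_sq_smul_comp_sub_div (hc : 0 < c) (f : ℝ → E) :
    ∫ t in Ioi 0, (1 + c / t ^ 2) • f (t - c / t) = ∫ u, f u := by
  conv_rhs => rw [← setIntegral_univ, ← image_sub_div_Ioi hc,
    integral_image_eq_integral_abs_deriv_smul measurableSet_Ioi
      (fun t ht => (hasDerivAt_sub_div c (ne_of_gt ht)).hasDerivWithinAt)
      (strictMonoOn_sub_div hc.le).injOn]
  refine setIntegral_congr_fun measurableSet_Ioi fun t _ => ?_
  rw [abs_of_nonneg (by positivity)]

lemma integrableOn_one_add_div_sq_smul_comp_sub_div (hc : 0 < c) {f : ℝ → E} (hf : Integrable f) :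
    IntegrableOn (fun t => (1 + c / t ^ 2) • f (t - c / t)) (Ioi 0) := by
  have := (integrableOn_image_iff_integrableOn_abs_deriv_smul measurableSet_Ioi
      (fun t ht => (hasDerivAt_sub_div c (ne_of_gt ht)).hasDerivWithinAt)
      (strictMonoOn_sub_div hc.le).injOn f).1 (by rw [image_sub_div_Ioi hc]; exact hf.integrableOn)
  refine this.congr_fun (fun t _ => ?_) measurableSet_Ioi
  dsimp only
  rw [abs_of_nonneg (by positivity)]

lemma integrableOn_comp_sub_div (hc : 0 < c) {f : ℝ → E} (hf : Integrable f) :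
    IntegrableOn (fun t => f (t - c / t)) (Ioi 0) := by
  have hone : ∀ t : ℝ, 1 ≤ 1 + c / t ^ 2 := fun t => by
    have : 0 ≤ c / t ^ 2 := by positivity
    linarith
  have hbound : ∀ t : ℝ, ‖(1 + c / t ^ 2)⁻¹‖ ≤ 1 := fun t => by
    rw [norm_inv, Real.norm_of_nonneg (by linarith [hone t])]
    exact inv_le_one_of_one_le₀ (hone t)
  have := (integrableOn_one_add_div_sq_smul_comp_sub_div hc hf).bdd_smul 1
    (φ := fun t : ℝ => (1 + c / t ^ 2)⁻¹) (by fun_prop : Measurable _).aestronglyMeasurable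
    (ae_of_all _ hbound)
  refine IntegrableOn.congr_fun this (fun t _ => ?_) measurableSet_Ioi
  simp only [Pi.smul_apply', inv_smul_smul₀ (by linarith [hone t] : 1 + c / t ^ 2 ≠ 0)]

lemma integral_Ioi_div_sq_smul_comp_div (hc : 0 < c) (g : ℝ → E) :
    ∫ t in Ioi 0, (c / t ^ 2) • g (c / t) = ∫ t in Ioi 0, g t := by
  have himage : (fun t : ℝ => c / t) '' Ioi 0 = Ioi 0 := by
    ext u
    refine ⟨fun ⟨t, ht, hu⟩ => hu ▸ div_pos hc ht, fun hu => ⟨c / u, div_pos hc hu, ?_⟩⟩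
    field_simp [(mem_Ioi.1 hu).ne']
  have hderiv : ∀ t ∈ Ioi (0 : ℝ), HasDerivWithinAt (fun t => c / t) (-(c / t ^ 2)) (Ioi 0) t :=
    fun t ht => by
      simpa [div_eq_mul_inv] using ((hasDerivAt_inv (ne_of_gt ht)).const_mul c).hasDerivWithinAt
  have hinj : InjOn (fun t : ℝ => c / t) (Ioi 0) := fun a ha b hb hab =>
    by simpa [div_eq_mul_inv, hc.ne'] using hab
  conv_rhs => rw [← himage, integral_image_eq_integral_abs_deriv_smul measurableSet_Ioi hderiv hinj]
  refine setIntegral_congr_fun measurableSet_Ioi fun t _ => ?_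
  rw [abs_neg, abs_of_nonneg (by positivity)]

theorem integral_Ioi_comp_sub_div (hc : 0 < c) {f : ℝ → E} (hf : Integrable f)
    (heven : ∀ u, f (-u) = f u) :
    ∫ t in Ioi 0, f (t - c / t) = (2 : ℝ)⁻¹ • ∫ u, f u := by
  have hF := integrableOn_comp_sub_div hc hf
  have hcF : IntegrableOn (fun t => (c / t ^ 2) • f (t - c / t)) (Ioi 0) :=
    ((integrableOn_one_add_div_sq_smul_comp_sub_div hc hf).sub hF).congr_fun
      (fun t _ => by simp [add_smul]) measurableSet_Ioi
  -- `t ↦ c / t` swaps `t - c / t` and its negative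
  have hinv : ∫ t in Ioi 0, (c / t ^ 2) • f (t - c / t) = ∫ t in Ioi 0, f (t - c / t) := by
    conv_rhs => rw [← integral_Ioi_div_sq_smul_comp_div hc (fun t => f (t - c / t))]
    refine setIntegral_congr_fun measurableSet_Ioi fun t ht => ?_
    rw [← heven (t - c / t)]
    congr 2
    field_simp [(mem_Ioi.1 ht).ne']
    ring
  have hsplit : ∫ u, f u
      = (∫ t in Ioi 0, f (t - c / t)) + ∫ t in Ioi 0, (c / t ^ 2) • f (t - c / t) := by
    rw [← integral_Ioi_one_add_div_sq_smul_comp_sub_div hc f, ← integral_add hF hcF]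
    simp only [add_smul, one_smul]
  rw [hsplit, hinv, smul_add, ← add_smul]
  norm_num

end CauchySchlomilch

lemma integral_Ioi_exp_neg_sq_sub_div {c : ℝ} (hc : 0 ≤ c) :
    ∫ t in Ioi 0, exp (-(t - c / t) ^ 2) = √π / 2 := by
  rcases hc.eq_or_lt with rfl | hc
  · simpa using integral_gaussian_Ioi 1
  · rw [integral_Ioi_comp_sub_div hc (f := fun u => exp (-u ^ 2))
      (by simpa using integrable_exp_neg_mul_sq one_pos) (fun u => by simp)]
    simpa [div_eq_inv_mul] using integral_gaussian 1

/-- Laplace kernel as a scale mixture of Gaussians with standard exponential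
mixing: exp(−b|x|) = ∫₀^∞ (1/√(πω)) · exp(−b²x²/(4ω)) · e^{−ω} dω. -/
theorem stmt_2 (x b : ℝ) (hb : 0 < b) :
    Real.exp (-(b * |x|)) =
    ∫ ω in Set.Ioi (0:ℝ),
      (1 / Real.sqrt (π * ω)) * Real.exp (b ^ 2 * x ^ 2 / (-(4 * ω))) * Real.exp (-ω) := by
  set c := b * |x| / 2
  have hc : 0 ≤ c := by positivity
  have hintegrand : ∀ t ∈ Ioi (0 : ℝ),
      (2 * t ^ ((2 : ℝ) - 1)) • ((1 / √(π * t ^ (2 : ℝ))) *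
        exp (b ^ 2 * x ^ 2 / (-(4 * t ^ (2 : ℝ)))) * exp (-t ^ (2 : ℝ)))
      = 2 / √π * exp (-(2 * c)) * exp (-(t - c / t) ^ 2) := by
    intro t (ht : 0 < t)
    have hbx : b ^ 2 * x ^ 2 = 4 * c ^ 2 := by
      simp only [c, div_pow, mul_pow, sq_abs]; ring
    have hexp : 4 * c ^ 2 / -(4 * t ^ 2) + -t ^ 2 = -(2 * c) + -(t - c / t) ^ 2 := by
      field_simp
      ring
    norm_num only [rpow_two, smul_eq_mul, rpow_one]
    rw [sqrt_mul pi_pos.le, sqrt_sq ht.le, hbx, mul_assoc _ (exp _), ← exp_add, hexp, exp_add]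
    field_simp
  rw [← integral_comp_rpow_Ioi_of_pos two_pos, setIntegral_congr_fun measurableSet_Ioi hintegrand,
    integral_const_mul, integral_Ioi_exp_neg_sq_sub_div hc, show 2 * c = b * |x| by ring]
  field_simp
end

section
/- Let Λ(x) = A + xB where A is n×n symmetric positive definite and B is n×n symmetric positive semidefinite. Then the function x ↦ det(Λ(x)) is a polynomial in x of degree equal to rank(B), with all coefficients nonnegative and positive leading coefficient. -/
/-!
Write `A = Sᴴ S` with `S` invertible. Then `A + x B = Sᴴ (1 + x C) S` with `C = S⁻ᴴ B S⁻¹`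
positive semidefinite of the same rank as `B`, so diagonalizing `C` gives
`det (A + x B) = det A * ∏ i, (1 + x μᵢ)` with eigenvalues `μᵢ ≥ 0`, exactly `rank B` of them
nonzero. Expanding this product gives nonnegative coefficients, degree `rank B` and leading
coefficient `det A * ∏_{μᵢ ≠ 0} μᵢ > 0`.
-/

open Finset Matrix Polynomial
open scoped MatrixOrder

namespace Polynomial

variable {ι R : Type*}

theorem coeff_mul_nonneg [Semiring R] [PartialOrder R] [IsOrderedRing R] {p q : R[X]}
    (hp : ∀ k, 0 ≤ p.coeff k) (hq : ∀ k, 0 ≤ q.coeff k) (k : ℕ) : 0 ≤ (p * q).coeff k := by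
  rw [coeff_mul]
  exact Finset.sum_nonneg fun _ _ => mul_nonneg (hp _) (hq _)

theorem coeff_prod_nonneg [CommSemiring R] [PartialOrder R] [IsOrderedRing R] (s : Finset ι)
    (f : ι → R[X]) (h : ∀ i ∈ s, ∀ k, 0 ≤ (f i).coeff k) (k : ℕ) :
    0 ≤ (∏ i ∈ s, f i).coeff k :=
  Finset.prod_induction f (fun p => ∀ k, 0 ≤ p.coeff k) (fun _ _ => coeff_mul_nonneg)
    (fun k => by rw [coeff_one]; split_ifs <;> simp) h k

section Domain

variable [CommRing R] [IsDomain R] [DecidableEq R] (s : Finset ι) (μ : ι → R)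

theorem natDegree_prod_C_mul_X_add_one :
    (∏ i ∈ s, (C (μ i) * X + 1)).natDegree = #{i ∈ s | μ i ≠ 0} := by
  rw [natDegree_prod _ _ fun i _ => ?_, Finset.card_filter]
  · refine Finset.sum_congr rfl fun i _ => ?_
    by_cases h : μ i = 0
    · simp [h]
    · rw [← C_1, natDegree_linear h, if_pos h]
  · intro h
    simpa using congrArg (coeff · 0) h

theorem leadingCoeff_prod_C_mul_X_add_one :
    (∏ i ∈ s, (C (μ i) * X + 1)).leadingCoeff = ∏ i ∈ s with μ i ≠ 0, μ i := by
  rw [leadingCoeff_prod, Finset.prod_filter]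
  refine Finset.prod_congr rfl fun i _ => ?_
  by_cases h : μ i = 0
  · simp [h]
  · rw [← C_1, leadingCoeff_linear h, if_pos h]

end Domain

end Polynomial

namespace Matrix

variable {n : Type*} [Fintype n] [DecidableEq n]

theorem IsHermitian.det_one_add_smul {C : Matrix n n ℝ} (hC : C.IsHermitian) (x : ℝ) :
    (1 + x • C).det = ∏ i, (1 + x * hC.eigenvalues i) := by
  have hcfc : 1 + x • C = cfc (fun t => 1 + x * t) C := by
    rw [cfc_add .., cfc_const_mul .., cfc_id' .., cfc_const_one ..]
  rw [hcfc, hC.cfc_eq]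
  simp [IsHermitian.cfc, -Unitary.conjStarAlgAut_apply]

theorem PosDef.exists_det_add_smul_eq_prod {A B : Matrix n n ℝ} (hA : A.PosDef)
    (hB : B.PosSemidef) :
    ∃ μ : n → ℝ, (∀ i, 0 ≤ μ i) ∧ #{i | μ i ≠ 0} = B.rank ∧
      ∀ x : ℝ, (A + x • B).det = A.det * ∏ i, (1 + x * μ i) := by
  obtain ⟨S, hS, rfl⟩ := CStarAlgebra.isStrictlyPositive_iff_eq_star_mul_self.mp
    hA.isStrictlyPositive
  lift S to (Matrix n n ℝ)ˣ using hS
  set C := star (S⁻¹ : Matrix n n ℝ) * B * (S⁻¹ : Matrix n n ℝ)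
  have hC : C.PosSemidef := hB.conjTranspose_mul_mul_same _
  have hB_eq : B = star (S : Matrix n n ℝ) * C * S := by
    simp [C, ← mul_assoc, ← star_mul]
  refine ⟨hC.1.eigenvalues, hC.eigenvalues_nonneg, ?_, fun x => ?_⟩
  · rw [← Fintype.card_subtype, ← hC.1.rank_eq_card_non_zero_eigs, hB_eq,
      rank_mul_eq_left_of_isUnit_det _ _ ((isUnit_iff_isUnit_det _).mp S.isUnit),
      rank_mul_eq_right_of_isUnit_det _ _ ((isUnit_iff_isUnit_det _).mp S.isUnit.star)]
  · have hcongr :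
        star (S : Matrix n n ℝ) * S + x • B = star (S : Matrix n n ℝ) * (1 + x • C) * S := by
      rw [hB_eq, mul_add, add_mul, mul_one, mul_smul_comm, smul_mul_assoc, mul_assoc]
    rw [hcongr, det_mul, det_mul, det_mul, mul_right_comm, hC.1.det_one_add_smul]

end Matrix

/-- For A symmetric positive definite and B symmetric positive semidefinite,
x ↦ det(A + xB) is a polynomial of degree rank(B) with nonnegative coefficients
and positive leading coefficient. -/
theorem stmt_15 {n : ℕ} (A B : Matrix (Fin n) (Fin n) ℝ)
    (hA : A.PosDef) (hB : B.PosSemidef) :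
    ∃ p : Polynomial ℝ,
      (∀ x : ℝ, (A + x • B).det = p.eval x) ∧
      p.natDegree = B.rank ∧
      (∀ k, 0 ≤ p.coeff k) ∧
      0 < p.leadingCoeff := by
  obtain ⟨μ, hμ_nonneg, hμ_card, hdet⟩ := hA.exists_det_add_smul_eq_prod hB
  have hdetA : 0 < A.det := hA.det_pos
  refine ⟨C A.det * ∏ i, (C (μ i) * X + 1), fun x => ?_, ?_, fun k => ?_, ?_⟩
  · simp only [hdet, eval_mul, eval_C, eval_prod, eval_add, eval_X, eval_one]
    exact congrArg _ (prod_congr rfl fun i _ => by ring)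
  · rw [natDegree_C_mul hdetA.ne', natDegree_prod_C_mul_X_add_one, hμ_card]
  · rw [coeff_C_mul]
    refine mul_nonneg hdetA.le (coeff_prod_nonneg _ _ (fun i _ j => ?_) k)
    rw [coeff_add, coeff_C_mul_X, coeff_one]
    split_ifs <;> linarith [hμ_nonneg i]
  · rw [leadingCoeff_mul, leadingCoeff_C, leadingCoeff_prod_C_mul_X_add_one]
    exact mul_pos hdetA (prod_pos fun i hi => (hμ_nonneg i).lt_of_ne' (mem_filter.mp hi).2)
end
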